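/- arXiv:1812.02543 — 4 statements merged into one kernel-verified Lean document; each statement's English description precedes it below -/
import Mathlib

section
/- Let (W,S) be a Coxeter system and let w, w' ∈ W with ℓ(w) = ℓ(w'). If w → w', then w and w' are tightly conjugate (w ≈_t w'). -/
open CoxeterSystem

variable {B W : Type*} [Group W] {M : CoxeterMatrix B}

/-- `w →ˢ w'`: one elementary conjugation by a simple reflection, not increasing length. -/
def ConjStep (cs : CoxeterSystem M W) (w w' : W) : Prop :=
  ∃ i : B, w' = cs.simple i * w * cs.simple i ∧ cs.length w' ≤ cs.length w

/-- `w → w'`: a finite chain of elementary conjugations. -/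
def ConjMove (cs : CoxeterSystem M W) : W → W → Prop :=
  Relation.ReflTransGen (ConjStep cs)

/-- `u` has minimal length in its conjugacy class. -/
def IsMinimalLength (cs : CoxeterSystem M W) (u : W) : Prop :=
  ∀ v : W, cs.length u ≤ cs.length (v⁻¹ * u * v)

/-- The standard parabolic subgroup `W_I`. -/
def StandardParabolic (cs : CoxeterSystem M W) (I : Set B) : Subgroup W :=
  Subgroup.closure (cs.simple '' I)

/-- `I` is spherical if `W_I` is finite. -/
def IsSpherical (cs : CoxeterSystem M W) (I : Set B) : Prop :=
  (StandardParabolic cs I : Set W).Finite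

/-- `w ≈ˣ w'`: elementarily strongly conjugate via `x`. -/
def ElemStrong (cs : CoxeterSystem M W) (x w w' : W) : Prop :=
  cs.length w = cs.length w' ∧ w' = x⁻¹ * w * x ∧
    (cs.length (x⁻¹ * w) = cs.length x + cs.length w ∨
     cs.length (w * x) = cs.length w + cs.length x)

/-- `w ∼ w'`: strongly conjugate. -/
def StrongConj (cs : CoxeterSystem M W) : W → W → Prop :=
  Relation.ReflTransGen (fun w w' => ∃ x : W, ElemStrong cs x w w')

/-- `w` and `w'` are elementarily tightly conjugate. -/
def ElemTight (cs : CoxeterSystem M W) (w w' : W) : Prop :=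
  cs.length w = cs.length w' ∧
    ((∃ i : B, w' = cs.simple i * w * cs.simple i) ∨
     (∃ I : Set B, IsSpherical cs I ∧ w ∈ Subgroup.normalizer (StandardParabolic cs I : Set W) ∧
       ∃ x ∈ StandardParabolic cs I, ElemStrong cs x w w'))

/-- `w ≈_t w'`: tightly conjugate. -/
def TightConj (cs : CoxeterSystem M W) : W → W → Prop :=
  Relation.ReflTransGen (ElemTight cs)

/-- `w` is elementarily related to `w'`: `w'` is a cyclic shift `s_k ⋯ s_d s_1 ⋯ s_{k-1}`
(`k ∈ {1, …, d}`) of some reduced decomposition `w = s_1 ⋯ s_d` of `w`. -/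
def ElemRelated (cs : CoxeterSystem M W) (w w' : W) : Prop :=
  ∃ ω : List B, cs.wordProd ω = w ∧ cs.IsReduced ω ∧
    ∃ k, 1 ≤ k ∧ k ≤ ω.length ∧ w' = cs.wordProd (ω.drop (k - 1) ++ ω.take (k - 1))

/-- `w ∼_κ w'`: related by a finite chain of cyclic shifts. -/
def KappaConj (cs : CoxeterSystem M W) : W → W → Prop :=
  Relation.ReflTransGen (ElemRelated cs)

/-- `w'` is a cyclic shift `s_{r+1} ⋯ s_d s_1 ⋯ s_r` (`r ∈ {1, …, d}`) of some reduced
decomposition `w = s_1 ⋯ s_d` of `w`. -/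
def CyclicShift (cs : CoxeterSystem M W) (w w' : W) : Prop :=
  ∃ ω : List B, cs.wordProd ω = w ∧ cs.IsReduced ω ∧
    ∃ r, 1 ≤ r ∧ r ≤ ω.length ∧ w' = cs.wordProd (ω.drop r ++ ω.take r)

/-- `w` is straight if `ℓ(wⁿ) = n ℓ(w)` for all `n : ℕ`. -/
def IsStraight (cs : CoxeterSystem M W) (w : W) : Prop :=
  ∀ n : ℕ, cs.length (w ^ n) = n * cs.length w

theorem ConjStep.length_le {cs : CoxeterSystem M W} {w w' : W} (h : ConjStep cs w w') :
    cs.length w' ≤ cs.length w :=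
  h.elim fun _ hi => hi.2

theorem ConjMove.length_le {cs : CoxeterSystem M W} {w w' : W} (h : ConjMove cs w w') :
    cs.length w' ≤ cs.length w := by
  induction h with
  | refl => exact le_rfl
  | tail _ hstep ih => exact hstep.length_le.trans ih

theorem ElemTight.of_conjStep {cs : CoxeterSystem M W} {w w' : W} (h : ConjStep cs w w')
    (hlen : cs.length w = cs.length w') : ElemTight cs w w' :=
  ⟨hlen, Or.inl (h.imp fun _ => And.left)⟩

/-- If `ℓ(w) = ℓ(w')` and `w → w'`, then `w ≈_t w'`. -/
theorem tightConj_of_conjMove (cs : CoxeterSystem M W) (w w' : W)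
    (hlen : cs.length w = cs.length w') (h : ConjMove cs w w') :
    TightConj cs w w' := by
  induction h using Relation.ReflTransGen.head_induction_on with
  | refl => exact Relation.ReflTransGen.refl
  | @head u v hstep hrest ih =>
    -- Lengths never increase along the chain, so with equal endpoints no step can shorten.
    have hstep_len : cs.length u = cs.length v :=
      le_antisymm (hlen ▸ ConjMove.length_le hrest) hstep.length_le
    exact .head (.of_conjStep hstep hstep_len) (ih (hstep_len ▸ hlen))
end

section
/- Let (W,S) be a Coxeter system, let w, u, x ∈ W and let ε ∈ {1, −1}. If ℓ(u⁻¹wᵉu) = ℓ(u⁻¹x) + ℓ(x⁻¹wᵉu), then ℓ(x⁻¹wx) ≤ ℓ(u⁻¹wu). In particular, if u⁻¹wu is of minimal length in the conjugacy class of w, then so is x⁻¹wx. -/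
open CoxeterSystem

variable {B W : Type*} [Group W] {M : CoxeterMatrix B}

namespace CoxeterSystem

variable (cs : CoxeterSystem M W)

/-- `x⁻¹gx = (x⁻¹gu)(u⁻¹x)`, so the triangle inequality bounds its length by the length of the
gallery `uC₀ → xC₀ → guC₀`, which is minimal by hypothesis. -/
theorem length_conj_le_of_length_eq_add {g u x : W}
    (h : cs.length (u⁻¹ * g * u) = cs.length (u⁻¹ * x) + cs.length (x⁻¹ * g * u)) :
    cs.length (x⁻¹ * g * x) ≤ cs.length (u⁻¹ * g * u) :=
  calc cs.length (x⁻¹ * g * x)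
      = cs.length ((x⁻¹ * g * u) * (u⁻¹ * x)) := by group
    _ ≤ cs.length (x⁻¹ * g * u) + cs.length (u⁻¹ * x) := cs.length_mul_le _ _
    _ = cs.length (u⁻¹ * g * u) := by omega

theorem length_conj_inv (w x : W) :
    cs.length (x⁻¹ * w⁻¹ * x) = cs.length (x⁻¹ * w * x) := by
  rw [← cs.length_inv (x⁻¹ * w * x)]
  group

theorem length_conj_zpow_of_eq_one_or_eq_neg_one {ε : ℤ} (hε : ε = 1 ∨ ε = -1) (w x : W) :
    cs.length (x⁻¹ * w ^ ε * x) = cs.length (x⁻¹ * w * x) := by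
  rcases hε with rfl | rfl
  · rw [zpow_one]
  · rw [zpow_neg_one, length_conj_inv]

end CoxeterSystem

theorem IsMinimalLength.conj_of_length_le {cs : CoxeterSystem M W} {w u x : W}
    (hmin : IsMinimalLength cs (u⁻¹ * w * u))
    (hle : cs.length (x⁻¹ * w * x) ≤ cs.length (u⁻¹ * w * u)) :
    IsMinimalLength cs (x⁻¹ * w * x) := by
  intro v
  have hconj : (u⁻¹ * (x * v))⁻¹ * (u⁻¹ * w * u) * (u⁻¹ * (x * v)) =
      v⁻¹ * (x⁻¹ * w * x) * v := by group
  exact hle.trans (hconj ▸ hmin (u⁻¹ * (x * v)))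

/-- `CMin(w)` is `w`-convex: if `xC₀` lies on a minimal gallery from `uC₀` to `wᵉuC₀`,
then `ℓ(x⁻¹wx) ≤ ℓ(u⁻¹wu)`; in particular minimality of `u⁻¹wu` passes to `x⁻¹wx`. -/
theorem cmin_w_convex (cs : CoxeterSystem M W) (w u x : W) (ε : ℤ)
    (hε : ε = 1 ∨ ε = -1)
    (h : cs.length (u⁻¹ * w ^ ε * u) =
      cs.length (u⁻¹ * x) + cs.length (x⁻¹ * w ^ ε * u)) :
    cs.length (x⁻¹ * w * x) ≤ cs.length (u⁻¹ * w * u) ∧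
      (IsMinimalLength cs (u⁻¹ * w * u) → IsMinimalLength cs (x⁻¹ * w * x)) := by
  have hle : cs.length (x⁻¹ * w * x) ≤ cs.length (u⁻¹ * w * u) := by
    simpa only [cs.length_conj_zpow_of_eq_one_or_eq_neg_one hε] using
      cs.length_conj_le_of_length_eq_add h
  exact ⟨hle, fun hmin => hmin.conj_of_length_le hle⟩
end

section
/- Let (W,S) be a Coxeter system, let w ∈ W be straight, let I ⊆ S be a spherical subset, and let u ∈ W be such that u⁻¹wu normalises W_I. If a, b ∈ W_I are such that both (ua)⁻¹w(ua) and (ub)⁻¹w(ub) are of minimal length in the conjugacy class of w, then (ua)⁻¹w(ua) = (ub)⁻¹w(ub). -/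
open CoxeterSystem

variable {B W : Type*} [Group W] {M : CoxeterMatrix B}

/-! Put `x = (ua)⁻¹w(ua)` and `y = (ub)⁻¹w(ub)`. Minimal-length conjugates of a straight element
are straight, both normalise the finite group `W_I`, and `y = xd` with `d ∈ W_I`.

A straight `x` normalising a finite `W_I` has no right inversion `t ∈ W_I`: some power `xⁿ`
centralises `t`, and then `t` would occur twice in the right inversion sequence of a reduced word
for `x · xⁿ`, once from each factor. Tits' cocycle `N(xd) = d⁻¹N(x)d ∆ N(d)` then shows that every
right descent of `d` is a right inversion of `y` lying in `W_I`, so `d` has none and `d = 1`.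

The cocycle comes from Tits' action of `W` on `W × ZMod 2`, whose second coordinate counts mod 2
the occurrences of `t` in the right inversion sequence of an arbitrary word for `w`. -/

theorem mul_mul_eq_iff_eq_inv_mul_mul_inv {G : Type*} [Group G] (a b c t : G) :
    a * t * b = c ↔ t = a⁻¹ * c * b⁻¹ := by
  constructor <;> rintro rfl <;> group

theorem ZMod.eq_zero_iff_ne_one_of_two (a : ZMod 2) : a = 0 ↔ a ≠ 1 := by
  revert a; decide

theorem Subgroup.exists_pow_conj_eq_of_mem_normalizer {G : Type*} [Group G] {S : Set G}
    (hS : S.Finite) {x t : G} (hx : x ∈ Subgroup.normalizer S) (ht : t ∈ S) :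
    ∃ n, 0 < n ∧ (x ^ n)⁻¹ * t * x ^ n = t := by
  have hmem (k : ℕ) : (x ^ k)⁻¹ * t * x ^ k ∈ S := by
    induction k with
    | zero => simpa using ht
    | succ k ih =>
      rw [show (x ^ (k + 1))⁻¹ * t * x ^ (k + 1) = x⁻¹ * ((x ^ k)⁻¹ * t * x ^ k) * x by group]
      exact (Subgroup.mem_set_normalizer_iff''.mp hx _).mp ih
  obtain ⟨p, q, hpq, heq⟩ := Set.Finite.exists_lt_map_eq_of_forall_mem hmem hS
  obtain ⟨n, rfl⟩ := Nat.exists_eq_add_of_lt hpq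
  refine ⟨n + 1, n.succ_pos, ?_⟩
  calc (x ^ (n + 1))⁻¹ * t * x ^ (n + 1)
      = x ^ p * ((x ^ (p + n + 1))⁻¹ * t * x ^ (p + n + 1)) * (x ^ p)⁻¹ := by group
    _ = t := by rw [← heq]; group

namespace CoxeterSystem

variable (cs : CoxeterSystem M W)

local prefix:100 "s " => cs.simple
local prefix:100 "π " => cs.wordProd
local prefix:100 "ℓ " => cs.length
local prefix:100 "ris " => cs.rightInvSeq

section ParityRepresentation

open Classical in
noncomputable def parityFlip (i : B) (p : W × ZMod 2) : W × ZMod 2 :=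
  (s i * p.1 * s i, p.2 + if p.1 = s i then 1 else 0)

theorem parityFlip_involutive (i : B) : Function.Involutive (cs.parityFlip i) := by
  classical
  rintro ⟨t, e⟩
  have hfix : s i * t * s i = s i ↔ t = s i := by
    rw [mul_mul_eq_iff_eq_inv_mul_mul_inv]; simp
  simp only [parityFlip, hfix]
  refine Prod.ext (by simp [mul_assoc]) ?_
  simp only [add_assoc, CharTwo.add_self_eq_zero, add_zero]

open Classical in
theorem parityFlip_comp_parityFlip_apply (i j : B) (t : W) (e : ZMod 2) :
    (cs.parityFlip i ∘ cs.parityFlip j) (t, e) =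
      ((s i * s j) * t * (s i * s j)⁻¹,
        e + ((if t = s j then 1 else 0) + if t = s j * (s i * s j) then 1 else 0)) := by
  have hfix : s j * t * s j = s i ↔ t = s j * (s i * s j) := by
    rw [mul_mul_eq_iff_eq_inv_mul_mul_inv]; simp [mul_assoc]
  simp only [Function.comp_apply, parityFlip, hfix, add_assoc]
  simp [mul_assoc]

open Classical in
theorem iterate_parityFlip_comp_parityFlip_apply (i j : B) (k : ℕ) (t : W) (e : ZMod 2) :
    (cs.parityFlip i ∘ cs.parityFlip j)^[k] (t, e) =
      ((s i * s j) ^ k * t * ((s i * s j) ^ k)⁻¹,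
        e + ∑ l ∈ Finset.range (2 * k), if t = s j * (s i * s j) ^ l then 1 else 0) := by
  induction k generalizing t e with
  | zero => simp
  | succ k ih =>
    have hshift (l : ℕ) : (s i * s j) * t * (s i * s j)⁻¹ = s j * (s i * s j) ^ l ↔
        t = s j * (s i * s j) ^ (l + 2) := by
      have hconj : (s i * s j)⁻¹ * (s j * (s i * s j) ^ l) * (s i * s j)⁻¹⁻¹ =
          s j * (s i * s j) ^ (l + 2) := by
        rw [inv_inv, mul_inv_rev, cs.inv_simple, cs.inv_simple, pow_succ, pow_succ']
        simp only [mul_assoc]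
      rw [mul_mul_eq_iff_eq_inv_mul_mul_inv, hconj]
    rw [Function.iterate_succ_apply, parityFlip_comp_parityFlip_apply, ih]
    refine Prod.ext (by simp only [pow_succ, mul_inv_rev, mul_assoc]) ?_
    simp only [hshift]
    rw [show 2 * (k + 1) = 2 * k + 1 + 1 by ring, Finset.sum_range_succ', Finset.sum_range_succ']
    simp only [zero_add, pow_zero, mul_one, pow_one, add_assoc]
    abel

theorem isLiftable_parityFlip :
    M.IsLiftable fun i ↦ (cs.parityFlip_involutive i).toPerm := by
  classical
  intro i j
  have hm : (s i * s j) ^ M i j = 1 := cs.simple_mul_simple_pow i j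
  ext ⟨t, e⟩ : 1
  rw [Equiv.Perm.coe_pow, Equiv.Perm.coe_mul, Function.Involutive.coe_toPerm,
    Function.Involutive.coe_toPerm, iterate_parityFlip_comp_parityFlip_apply, hm, two_mul,
    Finset.sum_range_add]
  simp [pow_add, hm, CharTwo.add_self_eq_zero]

noncomputable def parityRep : W →* Equiv.Perm (W × ZMod 2) :=
  cs.lift ⟨_, cs.isLiftable_parityFlip⟩

theorem parityRep_simple (i : B) : ⇑(cs.parityRep (s i)) = cs.parityFlip i := by
  simp [parityRep]

open Classical in
theorem parityRep_wordProd (ω : List B) (t : W) (e : ZMod 2) :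
    cs.parityRep (π ω) (t, e) = (π ω * t * (π ω)⁻¹, e + (ris ω).count t) := by
  induction ω generalizing t e with
  | nil => simp
  | cons i ω ih =>
    have hfix : π ω * t * (π ω)⁻¹ = s i ↔ (π ω)⁻¹ * s i * π ω = t := by
      rw [mul_mul_eq_iff_eq_inv_mul_mul_inv, inv_inv, eq_comm]
    rw [wordProd_cons, map_mul, Equiv.Perm.mul_apply, ih, parityRep_simple, parityFlip]
    refine Prod.ext (by simp [mul_assoc]) ?_
    simp only [rightInvSeq, hfix, List.count_cons, beq_iff_eq, Nat.cast_add, Nat.cast_ite,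
      Nat.cast_one, Nat.cast_zero, add_assoc]

noncomputable def inversionParity (w t : W) : ZMod 2 := (cs.parityRep w (t, 0)).2

theorem parityRep_apply (w t : W) (e : ZMod 2) :
    cs.parityRep w (t, e) = (w * t * w⁻¹, e + cs.inversionParity w t) := by
  obtain ⟨ω, rfl⟩ := cs.wordProd_surjective w
  simp [inversionParity, parityRep_wordProd]

open Classical in
theorem inversionParity_wordProd (ω : List B) (t : W) :
    cs.inversionParity (π ω) t = (ris ω).count t := by
  simp [inversionParity, parityRep_wordProd]

theorem inversionParity_mul (v w t : W) :
    cs.inversionParity (v * w) t = cs.inversionParity w t + cs.inversionParity v (w * t * w⁻¹) := by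
  rw [inversionParity, map_mul, Equiv.Perm.mul_apply, parityRep_apply, parityRep_apply, zero_add]

theorem inversionParity_one (t : W) : cs.inversionParity 1 t = 0 := by
  simp [inversionParity]

theorem inversionParity_simple_self (i : B) : cs.inversionParity (s i) (s i) = 1 := by
  simpa using cs.inversionParity_wordProd [i] (s i)

theorem IsReflection.inversionParity_self {t : W} (ht : cs.IsReflection t) :
    cs.inversionParity t t = 1 := by
  obtain ⟨v, i, rfl⟩ := ht
  have hconj : v⁻¹ * (v * s i * v⁻¹) * v⁻¹⁻¹ = s i := by group
  have hcancel := cs.inversionParity_mul v v⁻¹ (v * s i * v⁻¹)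
  have hsplit := cs.inversionParity_mul (v * s i) v⁻¹ (v * s i * v⁻¹)
  have hinner := cs.inversionParity_mul v (s i) (s i)
  rw [hconj, mul_inv_cancel, inversionParity_one] at hcancel
  rw [hconj] at hsplit
  rw [mul_inv_cancel_right, inversionParity_simple_self] at hinner
  linear_combination hsplit + hinner - hcancel

theorem mem_rightInvSeq_of_inversionParity_eq_one {ω : List B} {t : W}
    (h : cs.inversionParity (π ω) t = 1) : t ∈ ris ω := by
  classical
  rw [inversionParity_wordProd] at h
  refine List.count_pos_iff.mp (Nat.pos_of_ne_zero fun h0 ↦ ?_)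
  simp [h0] at h

theorem isRightInversion_iff_inversionParity_eq_one {w t : W} (ht : cs.IsReflection t) :
    cs.IsRightInversion w t ↔ cs.inversionParity w t = 1 := by
  have of_eq_one (w : W) (h : cs.inversionParity w t = 1) : cs.IsRightInversion w t := by
    obtain ⟨ω, hω, rfl⟩ := cs.exists_isReduced w
    exact cs.isRightInversion_of_mem_rightInvSeq hω (cs.mem_rightInvSeq_of_inversionParity_eq_one h)
  refine ⟨fun hw ↦ ?_, of_eq_one w⟩
  by_contra hne
  have hwt : cs.inversionParity (w * t) t = 1 := by
    rw [inversionParity_mul, ht.inversionParity_self, ht.mul_self, one_mul, ht.inv,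
      (ZMod.eq_zero_iff_ne_one_of_two _).mpr hne, add_zero]
  have := (of_eq_one (w * t) hwt).2
  rw [mul_assoc, ht.mul_self, mul_one] at this
  exact lt_asymm hw.2 this

theorem not_isRightInversion_iff_inversionParity_eq_zero {w t : W} (ht : cs.IsReflection t) :
    ¬ cs.IsRightInversion w t ↔ cs.inversionParity w t = 0 := by
  rw [ZMod.eq_zero_iff_ne_one_of_two, cs.isRightInversion_iff_inversionParity_eq_one ht]

theorem mem_rightInvSeq_of_isRightInversion {ω : List B} {t : W}
    (h : cs.IsRightInversion (π ω) t) : t ∈ ris ω :=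
  cs.mem_rightInvSeq_of_inversionParity_eq_one
    ((cs.isRightInversion_iff_inversionParity_eq_one h.1).mp h)

end ParityRepresentation

section Inversions

theorem rightInvSeq_append (ω ψ : List B) :
    ris (ω ++ ψ) = (ris ω).map (fun t ↦ (π ψ)⁻¹ * t * π ψ) ++ ris ψ := by
  induction ω with
  | nil => simp
  | cons i ω ih => simp [rightInvSeq, ih, wordProd_append, mul_assoc]

theorem exists_isReduced_append {u v : W} (h : ℓ (u * v) = ℓ u + ℓ v) :
    ∃ α β, cs.IsReduced (α ++ β) ∧ π α = u ∧ π β = v := by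
  obtain ⟨α, hα, rfl⟩ := cs.exists_isReduced u
  obtain ⟨β, hβ, rfl⟩ := cs.exists_isReduced v
  refine ⟨α, β, ?_, rfl, rfl⟩
  rw [IsReduced, wordProd_append, h, hα.eq, hβ.eq, List.length_append]

theorem isRightInversion_mul_of_length_mul_eq {u v t : W} (h : ℓ (u * v) = ℓ u + ℓ v)
    (ht : cs.IsRightInversion v t) : cs.IsRightInversion (u * v) t := by
  obtain ⟨α, β, hred, rfl, rfl⟩ := cs.exists_isReduced_append h
  rw [← wordProd_append]
  apply cs.isRightInversion_of_mem_rightInvSeq hred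
  rw [rightInvSeq_append]
  exact List.mem_append_right _ (cs.mem_rightInvSeq_of_isRightInversion ht)

theorem not_isRightInversion_conj_of_length_mul_eq {u v t : W} (h : ℓ (u * v) = ℓ u + ℓ v)
    (ht : cs.IsRightInversion u t) : ¬ cs.IsRightInversion v (v⁻¹ * t * v) := by
  intro hv
  obtain ⟨α, β, hred, rfl, rfl⟩ := cs.exists_isReduced_append h
  have hdisj := List.disjoint_of_nodup_append (cs.rightInvSeq_append α β ▸ hred.nodup_rightInvSeq)
  exact hdisj (List.mem_map_of_mem (cs.mem_rightInvSeq_of_isRightInversion ht))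
    (cs.mem_rightInvSeq_of_isRightInversion hv)

end Inversions

section Straight

variable {cs}

theorem length_pow_le (w : W) (n : ℕ) : ℓ (w ^ n) ≤ n * ℓ w := by
  induction n with
  | zero => simp
  | succ n ih =>
    rw [pow_succ, add_one_mul]
    exact (cs.length_mul_le _ _).trans (by omega)

theorem length_pow_le_length_conj_pow_add (w g : W) (n : ℕ) :
    ℓ (w ^ n) ≤ ℓ ((g⁻¹ * w * g) ^ n) + 2 * ℓ g := by
  have hconj : w ^ n = g * (g⁻¹ * w * g) ^ n * g⁻¹ := by
    rw [← inv_inv g, ← conj_pow, inv_inv]; group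
  calc ℓ (w ^ n) ≤ ℓ g + ℓ ((g⁻¹ * w * g) ^ n) + ℓ g⁻¹ := by
        rw [hconj]; exact (cs.length_mul_le _ _).trans (by grw [cs.length_mul_le])
    _ = ℓ ((g⁻¹ * w * g) ^ n) + 2 * ℓ g := by rw [length_inv]; ring

theorem _root_.IsStraight.length_pow_mul_pow {x : W} (hx : IsStraight cs x) (a b : ℕ) :
    ℓ (x ^ a * x ^ b) = ℓ (x ^ a) + ℓ (x ^ b) := by
  rw [← pow_add, hx, hx, hx, add_mul]

theorem _root_.IsStraight.mul_length_le_length_conj_pow {w : W} (hw : IsStraight cs w) (g : W)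
    (n : ℕ) : n * ℓ w ≤ ℓ ((g⁻¹ * w * g) ^ n) := by
  have hk (k : ℕ) : k * (n * ℓ w) ≤ k * ℓ ((g⁻¹ * w * g) ^ n) + 2 * ℓ g :=
    calc k * (n * ℓ w) = ℓ (w ^ (n * k)) := by rw [hw]; ring
      _ ≤ ℓ ((g⁻¹ * w * g) ^ (n * k)) + 2 * ℓ g := length_pow_le_length_conj_pow_add w g _
      _ ≤ k * ℓ ((g⁻¹ * w * g) ^ n) + 2 * ℓ g := by grw [pow_mul, length_pow_le]
  -- a bounded error `2 ℓ(g)` cannot survive multiplication by `k = 2 ℓ(g) + 1`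
  have := hk (2 * ℓ g + 1)
  nlinarith

theorem _root_.IsStraight.conj_of_isMinimalLength {w g : W} (hw : IsStraight cs w)
    (hmin : IsMinimalLength cs (g⁻¹ * w * g)) : IsStraight cs (g⁻¹ * w * g) := by
  have hlen : ℓ (g⁻¹ * w * g) = ℓ w := by
    refine le_antisymm ?_ (by simpa using hw.mul_length_le_length_conj_pow g 1)
    simpa [mul_assoc] using hmin g⁻¹
  intro n
  refine le_antisymm (length_pow_le _ n) ?_
  rw [hlen]
  exact hw.mul_length_le_length_conj_pow g n

end Straight

section Parabolic

variable {cs}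

theorem wordProd_mem_standardParabolic {I : Set B} {ω : List B} (hω : ∀ i ∈ ω, i ∈ I) :
    π ω ∈ StandardParabolic cs I := by
  induction ω with
  | nil => exact one_mem _
  | cons i ω ih =>
    rw [wordProd_cons]
    exact mul_mem (Subgroup.subset_closure ⟨i, hω i List.mem_cons_self, rfl⟩)
      (ih fun j hj ↦ hω j (List.mem_cons_of_mem i hj))

theorem exists_wordProd_eq_of_mem_standardParabolic {I : Set B} {d : W}
    (hd : d ∈ StandardParabolic cs I) : ∃ ω : List B, (∀ i ∈ ω, i ∈ I) ∧ π ω = d := by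
  induction hd using Subgroup.closure_induction with
  | mem _ hx =>
    obtain ⟨i, hi, rfl⟩ := hx
    exact ⟨[i], by simpa using hi, cs.wordProd_singleton i⟩
  | one => exact ⟨[], by simp, cs.wordProd_nil⟩
  | mul _ _ _ _ ihx ihy =>
    obtain ⟨ω₁, h₁, rfl⟩ := ihx
    obtain ⟨ω₂, h₂, rfl⟩ := ihy
    exact ⟨ω₁ ++ ω₂, by simpa [or_imp, forall_and] using ⟨h₁, h₂⟩, cs.wordProd_append ω₁ ω₂⟩
  | inv _ _ ihx =>
    obtain ⟨ω, h, rfl⟩ := ihx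
    exact ⟨ω.reverse, by simpa using h, cs.wordProd_reverse ω⟩

theorem rightInvSeq_subset_standardParabolic {I : Set B} {ω : List B} (hω : ∀ i ∈ ω, i ∈ I) :
    ∀ t ∈ ris ω, t ∈ StandardParabolic cs I := by
  induction ω with
  | nil => simp
  | cons i ω ih =>
    have hω' : ∀ j ∈ ω, j ∈ I := fun j hj ↦ hω j (List.mem_cons_of_mem i hj)
    have hπ := wordProd_mem_standardParabolic (cs := cs) hω'
    simp only [rightInvSeq, List.mem_cons, forall_eq_or_imp]
    exact ⟨mul_mem (mul_mem (inv_mem hπ)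
      (Subgroup.subset_closure ⟨i, hω i List.mem_cons_self, rfl⟩)) hπ, ih hω'⟩

theorem mem_standardParabolic_of_isRightInversion {I : Set B} {d t : W}
    (hd : d ∈ StandardParabolic cs I) (ht : cs.IsRightInversion d t) :
    t ∈ StandardParabolic cs I := by
  obtain ⟨ω, hω, rfl⟩ := exists_wordProd_eq_of_mem_standardParabolic hd
  exact rightInvSeq_subset_standardParabolic hω t (cs.mem_rightInvSeq_of_isRightInversion ht)

theorem _root_.IsStraight.not_isRightInversion_of_mem_standardParabolic {I : Set B}
    (hI : IsSpherical cs I) {x t : W} (hx : IsStraight cs x)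
    (hxn : x ∈ Subgroup.normalizer (StandardParabolic cs I : Set W))
    (ht : t ∈ StandardParabolic cs I) : ¬ cs.IsRightInversion x t := by
  intro hinv
  obtain ⟨n, hn, hfix⟩ := Subgroup.exists_pow_conj_eq_of_mem_normalizer hI hxn ht
  have hpow : cs.IsRightInversion (x ^ n) t := by
    obtain ⟨m, rfl⟩ := Nat.exists_eq_add_of_lt hn
    rw [zero_add, pow_succ]
    exact cs.isRightInversion_mul_of_length_mul_eq (by simpa using hx.length_pow_mul_pow m 1) hinv
  refine cs.not_isRightInversion_conj_of_length_mul_eq ?_ hinv (hfix ▸ hpow)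
  simpa using hx.length_pow_mul_pow 1 n

theorem eq_one_of_forall_not_isRightInversion {I : Set B} {x d : W}
    (hx : ∀ t ∈ StandardParabolic cs I, ¬ cs.IsRightInversion x t)
    (hxd : ∀ t ∈ StandardParabolic cs I, ¬ cs.IsRightInversion (x * d) t)
    (hd : d ∈ StandardParabolic cs I) : d = 1 := by
  by_contra hd1
  obtain ⟨j, hj⟩ := cs.exists_rightDescent_of_ne_one hd1
  have hinv : cs.IsRightInversion d (s j) :=
    (cs.isRightInversion_simple_iff_isRightDescent d j).mpr hj
  have hjI := mem_standardParabolic_of_isRightInversion hd hinv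
  have hconj : d * s j * d⁻¹ ∈ StandardParabolic cs I := mul_mem (mul_mem hd hjI) (inv_mem hd)
  have hrefl := (cs.isReflection_simple j).conj d
  apply hxd (s j) hjI
  rw [cs.isRightInversion_iff_inversionParity_eq_one (cs.isReflection_simple j),
    inversionParity_mul, (cs.isRightInversion_iff_inversionParity_eq_one hinv.1).mp hinv,
    (cs.not_isRightInversion_iff_inversionParity_eq_zero hrefl).mp (hx _ hconj), add_zero]

theorem _root_.IsStraight.eq_conj_of_mem_standardParabolic {I : Set B} (hI : IsSpherical cs I)
    {x c : W} (hx : IsStraight cs x) (hy : IsStraight cs (c⁻¹ * x * c))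
    (hxn : x ∈ Subgroup.normalizer (StandardParabolic cs I : Set W))
    (hc : c ∈ StandardParabolic cs I) : x = c⁻¹ * x * c := by
  have hcn : c ∈ Subgroup.normalizer (StandardParabolic cs I : Set W) := Subgroup.le_normalizer hc
  have hyn : c⁻¹ * x * c ∈ Subgroup.normalizer (StandardParabolic cs I : Set W) :=
    mul_mem (mul_mem (inv_mem hcn) hxn) hcn
  have hd : x⁻¹ * (c⁻¹ * x * c) ∈ StandardParabolic cs I := by
    have hxc : x⁻¹ * c⁻¹ * x ∈ StandardParabolic cs I :=
      (Subgroup.mem_set_normalizer_iff''.mp hxn _).mp (inv_mem hc)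
    simpa [mul_assoc] using mul_mem hxc hc
  refine inv_mul_eq_one.mp (eq_one_of_forall_not_isRightInversion
    (fun t ht ↦ hx.not_isRightInversion_of_mem_standardParabolic hI hxn ht)
    (fun t ht ↦ ?_) hd)
  rw [mul_inv_cancel_left]
  exact hy.not_isRightInversion_of_mem_standardParabolic hI hyn ht

end Parabolic

end CoxeterSystem

/-- For straight `w` and a spherical subset `I` with `u⁻¹wu` normalising `W_I`, any two
minimal-length conjugates of `w` by elements of the coset `uW_I` coincide. -/
theorem straight_min_conjugates_eq (cs : CoxeterSystem M W) (w u : W) (I : Set B)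
    (hw : IsStraight cs w) (hI : IsSpherical cs I)
    (hnorm : u⁻¹ * w * u ∈ Subgroup.normalizer (StandardParabolic cs I : Set W))
    (a b : W) (ha : a ∈ StandardParabolic cs I) (hb : b ∈ StandardParabolic cs I)
    (hamin : IsMinimalLength cs ((u * a)⁻¹ * w * (u * a)))
    (hbmin : IsMinimalLength cs ((u * b)⁻¹ * w * (u * b))) :
    (u * a)⁻¹ * w * (u * a) = (u * b)⁻¹ * w * (u * b) := by
  have han : a ∈ Subgroup.normalizer (StandardParabolic cs I : Set W) := Subgroup.le_normalizer ha
  have hxn : (u * a)⁻¹ * w * (u * a) ∈ Subgroup.normalizer (StandardParabolic cs I : Set W) := by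
    rw [show (u * a)⁻¹ * w * (u * a) = a⁻¹ * (u⁻¹ * w * u) * a by group]
    exact mul_mem (mul_mem (inv_mem han) hnorm) han
  have hys := hw.conj_of_isMinimalLength hbmin
  rw [show (u * b)⁻¹ * w * (u * b) = (a⁻¹ * b)⁻¹ * ((u * a)⁻¹ * w * (u * a)) * (a⁻¹ * b) by
    group] at hys ⊢
  exact (hw.conj_of_isMinimalLength hamin).eq_conj_of_mem_standardParabolic hI hys hxn
    (mul_mem (inv_mem ha) hb)
end

section
/- Let (W,S) be a Coxeter system and let v, w ∈ W be such that ℓ(v⁻¹wv) = ℓ(w). Then w is straight if and only if v⁻¹wv is straight. -/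
open CoxeterSystem

variable {B W : Type*} [Group W] {M : CoxeterMatrix B}

/-!
Length is subadditive and inverse-invariant, so `ℓ(w^k) ≤ ℓ(v⁻¹ w^k v) + 2 ℓ(v)` and
`ℓ(u^(nm)) ≤ m ℓ(u^n)` for `u = v⁻¹ w v`. If `w` is straight and `ℓ(u) = ℓ(w)`, then for every
`m` we get `m · n ℓ(u) ≤ 2 ℓ(v) + m ℓ(u^n)`; letting `m` grow forces `n ℓ(u) ≤ ℓ(u^n)`, and the
reverse inequality always holds. The converse follows by conjugating back with `v⁻¹`.
-/

theorem Nat.le_of_forall_mul_le_add {x y c : ℕ} (h : ∀ m : ℕ, m * x ≤ c + m * y) : x ≤ y := by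
  by_contra! hyx
  have hm := h (c + 1)
  have : (c + 1) * (y + 1) ≤ (c + 1) * x := Nat.mul_le_mul_left _ hyx
  nlinarith

section

variable (cs : CoxeterSystem M W)

theorem CoxeterSystem.length_pow_le_s19 (u : W) (n : ℕ) : cs.length (u ^ n) ≤ n * cs.length u := by
  induction n with
  | zero => simp
  | succ n ih =>
    calc cs.length (u ^ (n + 1)) ≤ cs.length (u ^ n) + cs.length u := by
          rw [pow_succ]; exact cs.length_mul_le _ _
      _ ≤ (n + 1) * cs.length u := by rw [Nat.succ_mul]; omega

theorem CoxeterSystem.length_le_length_conj_add (v w : W) :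
    cs.length w ≤ cs.length (v⁻¹ * w * v) + 2 * cs.length v := by
  have hw : w = v * (v⁻¹ * w * v) * v⁻¹ := by group
  calc cs.length w = cs.length (v * (v⁻¹ * w * v) * v⁻¹) := by rw [← hw]
    _ ≤ cs.length v + cs.length (v⁻¹ * w * v) + cs.length v⁻¹ :=
        (cs.length_mul_le _ _).trans (Nat.add_le_add_right (cs.length_mul_le _ _) _)
    _ = cs.length (v⁻¹ * w * v) + 2 * cs.length v := by rw [cs.length_inv]; ring

theorem isStraight_iff_forall_le_length_pow (w : W) :
    IsStraight cs w ↔ ∀ n : ℕ, n * cs.length w ≤ cs.length (w ^ n) :=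
  ⟨fun hw n => (hw n).ge, fun hw n => (cs.length_pow_le_s19 w n).antisymm (hw n)⟩

theorem IsStraight.conj {v w : W} (hw : IsStraight cs w)
    (h : cs.length (v⁻¹ * w * v) = cs.length w) : IsStraight cs (v⁻¹ * w * v) := by
  rw [isStraight_iff_forall_le_length_pow, h]
  intro n
  refine Nat.le_of_forall_mul_le_add (c := 2 * cs.length v) fun m => ?_
  have hpow : (v⁻¹ * w * v) ^ (n * m) = v⁻¹ * w ^ (n * m) * v := by
    simpa using conj_pow (a := v⁻¹) (b := w) (i := n * m)
  calc m * (n * cs.length w) = cs.length (w ^ (n * m)) := by rw [hw]; ring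
    _ ≤ cs.length ((v⁻¹ * w * v) ^ (n * m)) + 2 * cs.length v := by
        rw [hpow]; exact cs.length_le_length_conj_add v _
    _ ≤ m * cs.length ((v⁻¹ * w * v) ^ n) + 2 * cs.length v := by
        rw [pow_mul]; exact Nat.add_le_add_right (cs.length_pow_le_s19 _ m) _
    _ = 2 * cs.length v + m * cs.length ((v⁻¹ * w * v) ^ n) := Nat.add_comm _ _

end

/-- If `ℓ(v⁻¹wv) = ℓ(w)`, then `w` is straight iff `v⁻¹wv` is straight. -/
theorem straight_iff_conj_straight (cs : CoxeterSystem M W) (v w : W)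
    (h : cs.length (v⁻¹ * w * v) = cs.length w) :
    IsStraight cs w ↔ IsStraight cs (v⁻¹ * w * v) := by
  refine ⟨fun hw => hw.conj cs h, fun hu => ?_⟩
  have hw : v⁻¹⁻¹ * (v⁻¹ * w * v) * v⁻¹ = w := by group
  have hback := hu.conj cs (v := v⁻¹) (by rw [hw, h])
  rwa [hw] at hback
end
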